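/- Let d, N be natural numbers, i ≥ 1 a natural number, γ ≥ 0 and ω ≥ 0 real numbers. Define the polynomial P(x) = Σ_{n=0}^{N} binom(N, n) · n! · (d!/(d+n)!) · γ^n · x^n. Then: (a) ∫_0^∞ x^{d+i−1} · e^{−x} · P(x) dx = Σ_{n=0}^{N} binom(N, n) · n! · (d!/(d+n)!) · (d+i+n−1)! · γ^n; and (b) ∫_0^∞ x^{d} · e^{−x} · F_d(ω·x) · P(x) dx = Σ_{n=0}^{N} binom(N, n) · n! · (d!/(d+n)!) · γ^n · b_d(n, ω). -/

import Mathlib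

/-!
Both integrals reduce to the Gamma integrals `∫₀^∞ x^m e^{-x} dx = m!`. In (a) the polynomial
`P` is integrated term by term. In (b) the series of `F_d` is also integrated term by term, which
`∑_k ∫ |·| < ∞` justifies; this turns the `n`-th summand into
`∑_k d! (d+n+k)! / ((d+k)! k!) ω^k`. Vandermonde's identity writes its coefficients as a Cauchy
product of the coefficients of `e^ω` with those of the polynomial in `b_d(n, ω)`.
-/

/-- The entire function `F_m(y) = ∑_{k=0}^∞ (m! / ((m+k)! k!)) y^k`
(a normalized `₀F₁` hypergeometric-type series scaled by `m!`). -/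
noncomputable def F (m : ℕ) (y : ℝ) : ℝ :=
  ∑' k : ℕ, ((m.factorial : ℝ) / ((m + k).factorial * k.factorial)) * y ^ k

/-- `b_m(n, ω) = e^ω ∑_{k=0}^n (n! (m+n)! m! / ((n-k)! k! (m+k)!)) ω^k`. -/
noncomputable def b (m n : ℕ) (ω : ℝ) : ℝ :=
  Real.exp ω * ∑ k ∈ Finset.range (n + 1),
    ((n.factorial : ℝ) * (m + n).factorial * m.factorial /
      ((n - k).factorial * k.factorial * (m + k).factorial)) * ω ^ k

open MeasureTheory Set Finset Real
open scoped Nat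

theorem integrableOn_pow_mul_exp_neg (m : ℕ) :
    IntegrableOn (fun x : ℝ => x ^ m * exp (-x)) (Ioi 0) :=
  (GammaIntegral_convergent (s := m + 1) (by positivity)).congr_fun
    (fun x _ => by simp [mul_comm]) measurableSet_Ioi

theorem integral_pow_mul_exp_neg (m : ℕ) :
    ∫ x in Ioi (0 : ℝ), x ^ m * exp (-x) = m ! := by
  rw [← Gamma_nat_eq_factorial, Gamma_eq_integral (by positivity)]
  refine setIntegral_congr_fun measurableSet_Ioi fun x _ => ?_
  simp [mul_comm]

theorem pow_mul_exp_neg_mul_sum_eq (m : ℕ) (s : Finset ℕ) (c : ℕ → ℝ) (x : ℝ) :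
    x ^ m * exp (-x) * ∑ n ∈ s, c n * x ^ n = ∑ n ∈ s, c n * (x ^ (m + n) * exp (-x)) := by
  rw [mul_sum]
  exact sum_congr rfl fun n _ => by ring

theorem integrableOn_pow_mul_exp_neg_mul_sum (m : ℕ) (s : Finset ℕ) (c : ℕ → ℝ) :
    IntegrableOn (fun x : ℝ => x ^ m * exp (-x) * ∑ n ∈ s, c n * x ^ n) (Ioi 0) := by
  simp_rw [pow_mul_exp_neg_mul_sum_eq]
  exact integrable_finsetSum _ fun n _ => (integrableOn_pow_mul_exp_neg (m + n)).const_mul (c n)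

theorem integral_pow_mul_exp_neg_mul_sum (m : ℕ) (s : Finset ℕ) (c : ℕ → ℝ) :
    ∫ x in Ioi (0 : ℝ), x ^ m * exp (-x) * ∑ n ∈ s, c n * x ^ n
      = ∑ n ∈ s, c n * (m + n)! := by
  simp_rw [pow_mul_exp_neg_mul_sum_eq]
  rw [integral_finsetSum _ fun n _ => (integrableOn_pow_mul_exp_neg (m + n)).const_mul (c n)]
  simp_rw [integral_const_mul, integral_pow_mul_exp_neg]

theorem hasSum_choose_mul_pow_div_factorial (j : ℕ) (x : ℝ) :
    HasSum (fun k => (k.choose j : ℝ) * x ^ k / k !) (x ^ j / j ! * exp x) := by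
  rw [← hasSum_nat_add_iff' j]
  have hlow : ∑ k ∈ range j, (k.choose j : ℝ) * x ^ k / k ! = 0 :=
    sum_eq_zero fun k hk => by simp [Nat.choose_eq_zero_of_lt (mem_range.mp hk)]
  rw [hlow, sub_zero, exp_eq_exp_ℝ]
  refine ((NormedSpace.expSeries_div_hasSum_exp x).mul_left (x ^ j / j !)).congr_fun fun l => ?_
  have hfact := Nat.add_choose_mul_factorial_mul_factorial l j
  have hchoose : ((l + j).choose j : ℝ) ≠ 0 :=
    Nat.cast_ne_zero.mpr (Nat.choose_pos le_add_self).ne'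
  rw [← hfact, pow_add]
  push_cast
  field_simp

theorem hasSum_b (d n : ℕ) (ω : ℝ) :
    HasSum (fun k => (d ! : ℝ) / ((d + k)! * k !) * ω ^ k * (d + n + k)!) (b d n ω) := by
  have hb : b d n ω = ∑ j ∈ range (n + 1),
      ((n ! * d ! * (d + n).choose (n - j) : ℕ) : ℝ) * (ω ^ j / j ! * exp ω) := by
    unfold b
    rw [mul_sum]
    refine sum_congr rfl fun j hj => ?_
    have hjn : j ≤ n := Nat.lt_succ_iff.mp (mem_range.mp hj)
    rw [Nat.cast_mul, Nat.cast_choose ℝ (show n - j ≤ d + n by omega),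
      show d + n - (n - j) = d + j by omega]
    push_cast
    field_simp
  rw [hb]
  refine (hasSum_sum fun j _ =>
    (hasSum_choose_mul_pow_div_factorial j ω).mul_left _).congr_fun fun k => ?_
  have hvandermonde : ∑ j ∈ range (n + 1), k.choose j * (d + n).choose (n - j)
      = (d + k + n).choose n := by
    rw [show d + k + n = k + (d + n) by ring, Nat.add_choose_eq,
      Nat.sum_antidiagonal_eq_sum_range_succ (fun a b => k.choose a * (d + n).choose b)]
  have hfact := Nat.add_choose_mul_factorial_mul_factorial (d + k) n
  calc (d ! : ℝ) / ((d + k)! * k !) * ω ^ k * (d + n + k)!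
      = n ! * d ! * ω ^ k / k ! * ((d + k + n).choose n : ℕ) := by
        rw [show d + n + k = d + k + n by ring, ← hfact]
        push_cast
        field_simp
    _ = _ := by
        rw [← hvandermonde, Nat.cast_sum, mul_sum]
        refine sum_congr rfl fun j _ => ?_
        push_cast
        ring

theorem integral_pow_mul_exp_neg_mul_F_mul_sum (d : ℕ) (s : Finset ℕ) (c : ℕ → ℝ)
    (ω : ℝ) :
    ∫ x in Ioi (0 : ℝ), x ^ d * exp (-x) * F d (ω * x) * ∑ n ∈ s, c n * x ^ n
      = ∑ n ∈ s, c n * b d n ω := by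
  let G (ω' : ℝ) (c' : ℕ → ℝ) (k : ℕ) (x : ℝ) : ℝ :=
    (d ! : ℝ) / ((d + k)! * k !) * ω' ^ k * (x ^ (d + k) * exp (-x) * ∑ n ∈ s, c' n * x ^ n)
  have hG_int (ω' : ℝ) (c' : ℕ → ℝ) (k : ℕ) : IntegrableOn (G ω' c' k) (Ioi 0) :=
    (integrableOn_pow_mul_exp_neg_mul_sum (d + k) s c').const_mul _
  have hG_integral (ω' : ℝ) (c' : ℕ → ℝ) (k : ℕ) : ∫ x in Ioi 0, G ω' c' k x
      = ∑ n ∈ s, c' n * ((d ! : ℝ) / ((d + k)! * k !) * ω' ^ k * (d + n + k)!) := by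
    rw [integral_const_mul, integral_pow_mul_exp_neg_mul_sum, mul_sum]
    refine sum_congr rfl fun n _ => ?_
    rw [show d + k + n = d + n + k by ring]
    ring
  have hG_norm_le (k : ℕ) :
      ∫ x in Ioi 0, ‖G ω c k x‖ ≤ ∫ x in Ioi 0, G |ω| (fun n => |c n|) k x := by
    refine setIntegral_mono_on (hG_int ω c k).norm (hG_int _ _ k) measurableSet_Ioi
      fun x (hx : 0 < x) => ?_
    simp only [G, norm_mul, norm_pow, norm_div, Real.norm_eq_abs, Nat.abs_cast,
      abs_of_pos hx, abs_of_pos (exp_pos _)]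
    gcongr
    refine (abs_sum_le_sum_abs _ _).trans_eq (sum_congr rfl fun n _ => ?_)
    rw [abs_mul, abs_pow, abs_of_pos hx]
  have hG_summable : Summable fun k => ∫ x in Ioi 0, ‖G ω c k x‖ := by
    refine Summable.of_nonneg_of_le (fun k => integral_nonneg fun x => norm_nonneg _) hG_norm_le ?_
    simp_rw [hG_integral]
    exact summable_sum fun n _ => (hasSum_b d n |ω|).summable.mul_left _
  have hG_tsum (x : ℝ) :
      x ^ d * exp (-x) * F d (ω * x) * ∑ n ∈ s, c n * x ^ n = ∑' k, G ω c k x := by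
    rw [F, mul_assoc, ← tsum_mul_right, ← tsum_mul_left]
    refine tsum_congr fun k => ?_
    simp only [G, mul_pow, pow_add]
    ring
  have hsum_integral :
      HasSum (fun k => ∫ x in Ioi 0, G ω c k x) (∑ n ∈ s, c n * b d n ω) := by
    simp_rw [hG_integral]
    exact hasSum_sum fun n _ => (hasSum_b d n ω).mul_left (c n)
  rw [setIntegral_congr_fun measurableSet_Ioi fun x _ => hG_tsum x]
  exact (hasSum_integral_of_summable_integral_norm (hG_int ω c) hG_summable).unique hsum_integral

theorem stmt9_general (d N i : ℕ) (hi : 1 ≤ i) (γ ω : ℝ) :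
    ((∫ x in Set.Ioi (0 : ℝ), x ^ (d + i - 1) * Real.exp (-x) *
        ∑ n ∈ Finset.range (N + 1), (N.choose n : ℝ) * (n.factorial : ℝ) *
          ((d.factorial : ℝ) / ((d + n).factorial : ℝ)) * γ ^ n * x ^ n)
      = ∑ n ∈ Finset.range (N + 1), (N.choose n : ℝ) * (n.factorial : ℝ) *
          ((d.factorial : ℝ) / ((d + n).factorial : ℝ)) *
          ((d + i + n - 1).factorial : ℝ) * γ ^ n) ∧
    ((∫ x in Set.Ioi (0 : ℝ), x ^ d * Real.exp (-x) * F d (ω * x) *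
        ∑ n ∈ Finset.range (N + 1), (N.choose n : ℝ) * (n.factorial : ℝ) *
          ((d.factorial : ℝ) / ((d + n).factorial : ℝ)) * γ ^ n * x ^ n)
      = ∑ n ∈ Finset.range (N + 1), (N.choose n : ℝ) * (n.factorial : ℝ) *
          ((d.factorial : ℝ) / ((d + n).factorial : ℝ)) * γ ^ n * b d n ω) := by
  constructor
  · rw [integral_pow_mul_exp_neg_mul_sum]
    refine sum_congr rfl fun n _ => ?_
    rw [show d + i - 1 + n = d + i + n - 1 by omega]
    ring
  · exact integral_pow_mul_exp_neg_mul_F_mul_sum d _ _ ω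

/-- Evaluations of the auxiliary functions `𝒥_i^{(2)}` and `𝒦_i^{(2)}` of Appendix A
(with `d = K - N`), where `P(x) = ∑_{n=0}^N C(N,n) n! (d!/(d+n)!) γ^n x^n` is the
terminating Gauss hypergeometric function `₂F₁(1, -N; d+1; -γ x)`:
(a) `∫_0^∞ x^{d+i-1} e^{-x} P(x) dx = ∑_{n=0}^N C(N,n) n! (d!/(d+n)!) (d+i+n-1)! γ^n`;
(b) `∫_0^∞ x^d e^{-x} F_d(ω x) P(x) dx = ∑_{n=0}^N C(N,n) n! (d!/(d+n)!) γ^n b_d(n, ω)`. -/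
theorem stmt9 (d N i : ℕ) (hi : 1 ≤ i) (γ ω : ℝ) (hγ : 0 ≤ γ) (hω : 0 ≤ ω) :
    ((∫ x in Set.Ioi (0 : ℝ), x ^ (d + i - 1) * Real.exp (-x) *
        ∑ n ∈ Finset.range (N + 1), (N.choose n : ℝ) * (n.factorial : ℝ) *
          ((d.factorial : ℝ) / ((d + n).factorial : ℝ)) * γ ^ n * x ^ n)
      = ∑ n ∈ Finset.range (N + 1), (N.choose n : ℝ) * (n.factorial : ℝ) *
          ((d.factorial : ℝ) / ((d + n).factorial : ℝ)) *
          ((d + i + n - 1).factorial : ℝ) * γ ^ n) ∧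
    ((∫ x in Set.Ioi (0 : ℝ), x ^ d * Real.exp (-x) * F d (ω * x) *
        ∑ n ∈ Finset.range (N + 1), (N.choose n : ℝ) * (n.factorial : ℝ) *
          ((d.factorial : ℝ) / ((d + n).factorial : ℝ)) * γ ^ n * x ^ n)
      = ∑ n ∈ Finset.range (N + 1), (N.choose n : ℝ) * (n.factorial : ℝ) *
          ((d.factorial : ℝ) / ((d + n).factorial : ℝ)) * γ ^ n * b d n ω) :=
  stmt9_general d N i hi γ ω
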